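/- arXiv:math/0402112 — 4 statements merged into one kernel-verified Lean document; each statement's English description precedes it below -/
import Mathlib

section
/- Let 1 ≤ n ≤ N−1. The Gelfand–Zetlin operators satisfy the gl(N) commutation relation [E_{n,n+1}, E_{n+1,n}] = E_{nn} − E_{n+1,n+1}: for every function f : ℂ^Γ → ℂ and every point γ with γ_{mj} − γ_{ms} ∉ iℏ·ℤ for all m and all j ≠ s, one has (E_{n,n+1}(E_{n+1,n} f))(γ) − (E_{n+1,n}(E_{n,n+1} f))(γ) = (E_{nn} f)(γ) − (E_{n+1,n+1} f)(γ). -/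
noncomputable section

open Finset

/-- A point of the Gelfand–Zetlin variable space: an assignment of a complex
number to each index pair `(n, j)` (with `γ (N, j)` playing the role of the
fixed top-level parameters). -/
abbrev Pt : Type := ℕ × ℕ → ℂ

/-- Operators acting on functions of the Gelfand–Zetlin variables. -/
abbrev Op : Type := (Pt → ℂ) → (Pt → ℂ)

/-- Shift the coordinate `γ (n, j)` by `c`. -/
def shift (n j : ℕ) (c : ℂ) (γ : Pt) : Pt :=
  fun p => if p = (n, j) then γ p + c else γ p

/-- The diagonal Gelfand–Zetlin operator `E_{nn}`. -/
def Ediag (hb : ℂ) (n : ℕ) : Op := fun f γ =>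
  (1 / (Complex.I * hb)) *
    ((∑ j ∈ Finset.Icc 1 n, γ (n, j)) - ∑ j ∈ Finset.Icc 1 (n - 1), γ (n - 1, j)) * f γ

/-- The raising Gelfand–Zetlin operator `E_{n,n+1}`. -/
def Eraise (hb : ℂ) (n : ℕ) : Op := fun f γ =>
  -(1 / (Complex.I * hb)) * ∑ j ∈ Finset.Icc 1 n,
    ((∏ r ∈ Finset.Icc 1 (n + 1), (γ (n, j) - γ (n + 1, r) - Complex.I * hb / 2)) /
        ∏ s ∈ (Finset.Icc 1 n).erase j, (γ (n, j) - γ (n, s))) *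
      f (shift n j (-(Complex.I * hb)) γ)

/-- The lowering Gelfand–Zetlin operator `E_{n+1,n}`. -/
def Elower (hb : ℂ) (n : ℕ) : Op := fun f γ =>
  (1 / (Complex.I * hb)) * ∑ j ∈ Finset.Icc 1 n,
    ((∏ r ∈ Finset.Icc 1 (n - 1), (γ (n, j) - γ (n - 1, r) + Complex.I * hb / 2)) /
        ∏ s ∈ (Finset.Icc 1 n).erase j, (γ (n, j) - γ (n, s))) *
      f (shift n j (Complex.I * hb) γ)

/-- Genericity: `γ (m, j) - γ (m, s) ∉ ihb·ℤ` for all levels `m ≤ N` and all `j ≠ s`. -/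
def Generic (N : ℕ) (hb : ℂ) (γ : Pt) : Prop :=
  ∀ m j s, 1 ≤ m → m ≤ N → 1 ≤ j → j ≤ m → 1 ≤ s → s ≤ m → j ≠ s →
    ∀ k : ℤ, γ (m, j) - γ (m, s) ≠ Complex.I * hb * (k : ℂ)

/-!
Expanding both compositions gives double sums over pairs `(j, k)` of products of two
coefficients, applied to `f` at `γ` shifted by `iℏ (e_{nk} - e_{nj})`. For `j ≠ k` the two
products agree, since only the factors `(γ_{nj} - γ_{nk})(γ_{nk} - γ_{nj} + iℏ)` and
`(γ_{nk} - γ_{nj})(γ_{nj} - γ_{nk} - iℏ)` differ, and these are equal; so only the terms `j = k`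
survive, all of which evaluate `f` at `γ`. Up to the factor `-iℏ`, the surviving scalar is
`∑_v ∏_ρ (v - ρ) / ∏_{w ≠ v} (v - w)`, summed over the `2n` nodes `v ∈ {γ_{nj}, γ_{nj} + iℏ}`,
with `2n` roots `ρ` coming from the rows `n ± 1`. By Lagrange interpolation this is the
coefficient of `z^{2n-1}` in `∏_ρ (z - ρ) - ∏_v (z - v)`, namely
`∑ v - ∑ ρ = 2 ∑_j γ_{nj} - ∑_r γ_{n+1,r} - ∑_r γ_{n-1,r}`, the multiplier of
`iℏ (E_{nn} - E_{n+1,n+1})`.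
-/

open Polynomial in
theorem sum_prod_sub_div_prod_sub {F ι κ : Type*} [Field F] [DecidableEq ι]
    {s : Finset ι} {t : Finset κ} {v : ι → F} (a : κ → F) (hv : Set.InjOn v s)
    (hcard : #t = #s) :
    ∑ i ∈ s, (∏ r ∈ t, (v i - a r)) / ∏ j ∈ s.erase i, (v i - v j) =
      ∑ i ∈ s, v i - ∑ r ∈ t, a r := by
  rcases s.eq_empty_or_nonempty with rfl | hs
  · simp [card_eq_zero.mp hcard]
  have hdeg : (Lagrange.nodal t a).degree = (Lagrange.nodal s v).degree := by
    rw [Lagrange.degree_nodal, Lagrange.degree_nodal, hcard]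
  have hlt : (Lagrange.nodal t a - Lagrange.nodal s v).degree < #s := by
    rw [← Lagrange.degree_nodal (s := s) (v := v), ← hdeg]
    exact degree_sub_lt_left hdeg Lagrange.nodal_ne_zero
      (Lagrange.nodal_monic.leadingCoeff.trans Lagrange.nodal_monic.leadingCoeff.symm)
  calc ∑ i ∈ s, (∏ r ∈ t, (v i - a r)) / ∏ j ∈ s.erase i, (v i - v j)
      = ∑ i ∈ s, (Lagrange.nodal t a - Lagrange.nodal s v).eval (v i) /
          ∏ j ∈ s.erase i, (v i - v j) := by
        refine sum_congr rfl fun i hi => ?_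
        rw [eval_sub, Lagrange.eval_nodal_at_node hi, sub_zero, Lagrange.eval_nodal]
    _ = (Lagrange.nodal t a - Lagrange.nodal s v).coeff (#s - 1) :=
        (Lagrange.coeff_eq_sum hv hlt).symm
    _ = ∑ i ∈ s, v i - ∑ r ∈ t, a r := by
        rw [coeff_sub, Lagrange.nodal_eq, Lagrange.nodal_eq,
          prod_X_sub_C_coeff_card_pred s v hs.card_pos, ← hcard,
          prod_X_sub_C_coeff_card_pred t a (hcard ▸ hs.card_pos)]
        ring

theorem disjSum_erase_inl {α β : Type*} [DecidableEq α] [DecidableEq β]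
    (s : Finset α) (t : Finset β) (a : α) :
    (s.disjSum t).erase (.inl a) = (s.erase a).disjSum t := by
  ext (x | x) <;> simp

theorem disjSum_erase_inr {α β : Type*} [DecidableEq α] [DecidableEq β]
    (s : Finset α) (t : Finset β) (b : β) :
    (s.disjSum t).erase (.inr b) = s.disjSum (t.erase b) := by
  ext (x | x) <;> simp

theorem sum_sum_mul_sub_sum_sum_mul {ι R : Type*} [CommRing R] {s : Finset ι}
    {A B g : ι → ι → R} (h : ∀ j ∈ s, ∀ k ∈ s, j ≠ k → A j k = B j k) :
    ∑ j ∈ s, ∑ k ∈ s, A j k * g j k - ∑ j ∈ s, ∑ k ∈ s, B j k * g j k =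
      ∑ j ∈ s, (A j j - B j j) * g j j := by
  rw [← sum_sub_distrib]
  refine sum_congr rfl fun j hj => ?_
  rw [← sum_sub_distrib, sum_eq_single_of_mem j hj, sub_mul]
  intro k hk hkj
  rw [h j hj k hk hkj.symm, sub_self]

section GZCoeff

variable {F ι κ μ : Type*} [Field F] [DecidableEq ι]

def gzCoeff (s : Finset ι) (x : ι → F) (t : Finset κ) (a : κ → F) (j : ι) : F :=
  (∏ r ∈ t, (x j - a r)) / ∏ k ∈ s.erase j, (x j - x k)

theorem gzCoeff_update_self (s : Finset ι) (x : ι → F) (t : Finset κ) (a : κ → F) (j : ι)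
    (y : F) :
    gzCoeff s (Function.update x j y) t a j =
      (∏ r ∈ t, (y - a r)) / ∏ k ∈ s.erase j, (y - x k) := by
  simp only [gzCoeff, Function.update_self]
  congr 1
  exact prod_congr rfl fun k hk => by
    rw [Function.update_of_ne (ne_of_mem_erase hk)]

theorem gzCoeff_update_of_ne {s : Finset ι} {j k : ι} (hj : j ∈ s) (hjk : j ≠ k) (x : ι → F)
    (t : Finset κ) (a : κ → F) (y : F) :
    gzCoeff s (Function.update x j y) t a k =
      (∏ r ∈ t, (x k - a r)) / ((x k - y) * ∏ l ∈ (s.erase k).erase j, (x k - x l)) := by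
  rw [gzCoeff, Function.update_of_ne hjk.symm,
    ← mul_prod_erase _ _ (mem_erase.2 ⟨hjk, hj⟩), Function.update_self]
  congr 2
  exact prod_congr rfl fun l hl => by
    rw [Function.update_of_ne (ne_of_mem_erase hl)]

theorem gzCoeff_eq_div_mul {s : Finset ι} {j k : ι} (hk : k ∈ s) (hjk : j ≠ k) (x : ι → F)
    (t : Finset κ) (a : κ → F) :
    gzCoeff s x t a j =
      (∏ r ∈ t, (x j - a r)) / ((x j - x k) * ∏ l ∈ (s.erase j).erase k, (x j - x l)) := by
  simpa using gzCoeff_update_of_ne hk hjk.symm x t a (x k)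

theorem gzCoeff_mul_gzCoeff_update_comm {s : Finset ι} {j k : ι} (hj : j ∈ s) (hk : k ∈ s)
    (hjk : j ≠ k) (x : ι → F) (t : Finset κ) (a : κ → F) (u : Finset μ) (b : μ → F) (c : F) :
    gzCoeff s x t a j * gzCoeff s (Function.update x j (x j - c)) u b k =
      gzCoeff s x u b k * gzCoeff s (Function.update x k (x k + c)) t a j := by
  rw [gzCoeff_eq_div_mul hk hjk x t a, gzCoeff_update_of_ne hj hjk,
    gzCoeff_eq_div_mul hj hjk.symm x u b, gzCoeff_update_of_ne hk hjk.symm,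
    div_mul_div_comm, div_mul_div_comm]
  congr 1 <;> ring

theorem injOn_sum_elim_add {s : Finset ι} {x : ι → F} {c : F} (hc : c ≠ 0)
    (hx : ∀ i ∈ s, ∀ j ∈ s, i ≠ j → x i ≠ x j ∧ x i ≠ x j + c) :
    Set.InjOn (Sum.elim x (x · + c)) (s.disjSum s) := by
  have hshift : ∀ i ∈ s, ∀ j ∈ s, x i ≠ x j + c := fun i hi j hj h => by
    rcases eq_or_ne i j with rfl | hij
    · exact hc (by linear_combination -h)
    · exact (hx i hi j hj hij).2 h
  have hinj : ∀ i ∈ s, ∀ j ∈ s, x i = x j → i = j := fun i hi j hj h => by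
    by_contra hij
    exact (hx i hi j hj hij).1 h
  rintro (i | i) hi (j | j) hj h <;>
    simp only [mem_coe, inl_mem_disjSum, inr_mem_disjSum, Sum.elim_inl,
      Sum.elim_inr, Sum.inl.injEq, Sum.inr.injEq, reduceCtorEq] at hi hj h ⊢
  · exact hinj i hi j hj h
  · exact hshift i hi j hj h
  · exact hshift j hj i hi h.symm
  · exact hinj i hi j hj (add_right_cancel h)

theorem sum_gzCoeff_mul_gzCoeff_update_sub {s : Finset ι} {t : Finset κ} {u : Finset μ}
    {x : ι → F} {c : F} (hc : c ≠ 0)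
    (hx : ∀ i ∈ s, ∀ j ∈ s, i ≠ j → x i ≠ x j ∧ x i ≠ x j + c) (hcard : #t + #u = 2 * #s)
    (a : κ → F) (b : μ → F) :
    ∑ j ∈ s, (gzCoeff s x t a j * gzCoeff s (Function.update x j (x j - c)) u b j -
        gzCoeff s x u b j * gzCoeff s (Function.update x j (x j + c)) t a j) =
      -c * (∑ j ∈ s, x j + ∑ j ∈ s, (x j + c) - (∑ r ∈ t, a r + ∑ r ∈ u, (b r + c))) := by
  have hres := sum_prod_sub_div_prod_sub (t := t.disjSum u) (Sum.elim a (b · + c))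
    (injOn_sum_elim_add hc hx) (by simp only [card_disjSum]; omega)
  simp only [sum_disjSum, prod_disjSum, disjSum_erase_inl, disjSum_erase_inr,
    Sum.elim_inl, Sum.elim_inr, sub_add_eq_sub_sub_swap, add_sub_cancel_right] at hres
  -- the `j`-th summand is `-c` times the residues at the nodes `x j` and `x j + c`
  refine Eq.trans ?_ ((congrArg (-c * ·) hres).trans (by ring))
  rw [mul_add, mul_sum, mul_sum, ← sum_add_distrib]
  refine sum_congr rfl fun j hj => ?_
  rw [gzCoeff_update_self, gzCoeff_update_self, gzCoeff, gzCoeff,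
    ← mul_prod_erase s (fun k => x j - c - x k) hj,
    ← mul_prod_erase s (fun k => x j + c - x k) hj, sub_sub_cancel_left,
    add_sub_cancel_left]
  field_simp
  ring

end GZCoeff

def row (γ : Pt) (m : ℕ) : ℕ → ℂ := fun j => γ (m, j)

def raiseRoots (hb : ℂ) (n : ℕ) (γ : Pt) : ℕ → ℂ := fun r => γ (n + 1, r) + Complex.I * hb / 2

def lowerRoots (hb : ℂ) (n : ℕ) (γ : Pt) : ℕ → ℂ := fun r => γ (n - 1, r) - Complex.I * hb / 2

section Shift

variable (n j : ℕ) (d : ℂ) (γ : Pt)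

theorem shift_apply_of_fst_ne {m : ℕ} (h : m ≠ n) (r : ℕ) : shift n j d γ (m, r) = γ (m, r) :=
  if_neg (by simp [h])

theorem row_shift : row (shift n j d γ) n = Function.update (row γ n) j (row γ n j + d) := by
  funext k
  by_cases hk : k = j
  · subst hk
    simp [row, shift]
  · simp [row, shift, hk]

theorem raiseRoots_shift (hb : ℂ) : raiseRoots hb n (shift n j d γ) = raiseRoots hb n γ := by
  funext r
  simp only [raiseRoots, shift_apply_of_fst_ne n j d γ (Nat.succ_ne_self n)]

theorem lowerRoots_shift (hb : ℂ) (hn : 1 ≤ n) :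
    lowerRoots hb n (shift n j d γ) = lowerRoots hb n γ := by
  funext r
  simp only [lowerRoots, shift_apply_of_fst_ne n j d γ (show n - 1 ≠ n by omega)]

theorem shift_comm (k : ℕ) (e : ℂ) :
    shift n k e (shift n j d γ) = shift n j d (shift n k e γ) := by
  funext p
  simp only [shift]
  split_ifs <;> simp_all [add_right_comm]

theorem shift_shift_neg : shift n j d (shift n j (-d) γ) = γ := by
  funext p
  by_cases hp : p = (n, j) <;> simp [shift, hp]

end Shift

section Operators

variable (hb : ℂ) (n : ℕ) (f : Pt → ℂ) (γ : Pt)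

theorem Eraise_apply : Eraise hb n f γ = -(1 / (Complex.I * hb)) * ∑ j ∈ Icc 1 n,
    gzCoeff (Icc 1 n) (row γ n) (Icc 1 (n + 1)) (raiseRoots hb n γ) j *
      f (shift n j (-(Complex.I * hb)) γ) := by
  unfold Eraise
  congr 1
  refine sum_congr rfl fun j _ => ?_
  congr 2
  exact prod_congr rfl fun r _ => by simp only [raiseRoots, row]; ring

theorem Elower_apply : Elower hb n f γ = (1 / (Complex.I * hb)) * ∑ j ∈ Icc 1 n,
    gzCoeff (Icc 1 n) (row γ n) (Icc 1 (n - 1)) (lowerRoots hb n γ) j *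
      f (shift n j (Complex.I * hb) γ) := by
  unfold Elower
  congr 1
  refine sum_congr rfl fun j _ => ?_
  congr 2
  exact prod_congr rfl fun r _ => by simp only [lowerRoots, row]; ring

end Operators

theorem Eraise_Elower_sub_Elower_Eraise (hb : ℂ) {n : ℕ} (hn : 1 ≤ n) (f : Pt → ℂ) (γ : Pt) :
    Eraise hb n (Elower hb n f) γ - Elower hb n (Eraise hb n f) γ =
      -(1 / (Complex.I * hb)) * (1 / (Complex.I * hb)) * (∑ j ∈ Icc 1 n,
        (gzCoeff (Icc 1 n) (row γ n) (Icc 1 (n + 1)) (raiseRoots hb n γ) j *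
            gzCoeff (Icc 1 n) (Function.update (row γ n) j (row γ n j - Complex.I * hb))
              (Icc 1 (n - 1)) (lowerRoots hb n γ) j -
          gzCoeff (Icc 1 n) (row γ n) (Icc 1 (n - 1)) (lowerRoots hb n γ) j *
            gzCoeff (Icc 1 n) (Function.update (row γ n) j (row γ n j + Complex.I * hb))
              (Icc 1 (n + 1)) (raiseRoots hb n γ) j)) * f γ := by
  set c := Complex.I * hb
  have expand₁ : Eraise hb n (Elower hb n f) γ = -(1 / c) * (1 / c) *
      ∑ j ∈ Icc 1 n, ∑ k ∈ Icc 1 n,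
        gzCoeff (Icc 1 n) (row γ n) (Icc 1 (n + 1)) (raiseRoots hb n γ) j *
          gzCoeff (Icc 1 n) (Function.update (row γ n) j (row γ n j - c))
            (Icc 1 (n - 1)) (lowerRoots hb n γ) k *
          f (shift n k c (shift n j (-c) γ)) := by
    simp only [Eraise_apply, Elower_apply, row_shift, lowerRoots_shift _ _ _ _ _ hn,
      ← sub_eq_add_neg, mul_sum]
    exact sum_congr rfl fun j _ => sum_congr rfl fun k _ => by ring
  have expand₂ : Elower hb n (Eraise hb n f) γ = -(1 / c) * (1 / c) *
      ∑ j ∈ Icc 1 n, ∑ k ∈ Icc 1 n,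
        gzCoeff (Icc 1 n) (row γ n) (Icc 1 (n - 1)) (lowerRoots hb n γ) k *
          gzCoeff (Icc 1 n) (Function.update (row γ n) k (row γ n k + c))
            (Icc 1 (n + 1)) (raiseRoots hb n γ) j *
          f (shift n k c (shift n j (-c) γ)) := by
    rw [sum_comm]
    simp only [Eraise_apply, Elower_apply, row_shift, raiseRoots_shift, mul_sum]
    exact sum_congr rfl fun k _ => sum_congr rfl fun j _ => by
      rw [shift_comm]; ring
  rw [expand₁, expand₂, ← mul_sub, sum_sum_mul_sub_sum_sum_mul]
  · simp only [shift_shift_neg, ← sum_mul, mul_assoc]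
  · intro j hj k hk hjk
    exact gzCoeff_mul_gzCoeff_update_comm hj hk hjk _ _ _ _ _ c

theorem gz_commutator_diag_general (N : ℕ) (hb : ℂ) (hhb : hb ≠ 0)
    (n : ℕ) (hn1 : 1 ≤ n) (hn2 : n ≤ N - 1)
    (f : Pt → ℂ) (γ : Pt) (hγ : Generic N hb γ) :
    Eraise hb n (Elower hb n f) γ - Elower hb n (Eraise hb n f) γ =
      Ediag hb n f γ - Ediag hb (n + 1) f γ := by
  have hc : Complex.I * hb ≠ 0 := mul_ne_zero Complex.I_ne_zero hhb
  have hrow : ∀ i ∈ Icc 1 n, ∀ j ∈ Icc 1 n, i ≠ j →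
      row γ n i ≠ row γ n j ∧ row γ n i ≠ row γ n j + Complex.I * hb := by
    intro i hi j hj hij
    rw [mem_Icc] at hi hj
    have hgen := hγ n i j hn1 (by omega) hi.1 hi.2 hj.1 hj.2 hij
    exact ⟨fun h => hgen 0 (by rw [row, row] at h; simp [h]),
      fun h => hgen 1 (by rw [row, row] at h; rw [h]; push_cast; ring)⟩
  have hcard : #(Icc 1 (n + 1)) + #(Icc 1 (n - 1)) = 2 * #(Icc 1 n) := by
    simp only [Nat.card_Icc]
    omega
  rw [Eraise_Elower_sub_Elower_Eraise hb hn1, sum_gzCoeff_mul_gzCoeff_update_sub hc hrow hcard]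
  simp only [Ediag, raiseRoots, lowerRoots, row, sum_add_distrib, sum_sub_distrib,
    sum_const, Nat.card_Icc, nsmul_eq_mul, Nat.add_sub_cancel]
  rw [Nat.cast_sub hn1]
  field_simp
  push_cast
  ring

/-- `[E_{n,n+1}, E_{n+1,n}] = E_{nn} − E_{n+1,n+1}` pointwise at generic points. -/
theorem gz_commutator_diag (N : ℕ) (hN : 2 ≤ N) (hb : ℂ) (hhb : hb ≠ 0)
    (n : ℕ) (hn1 : 1 ≤ n) (hn2 : n ≤ N - 1)
    (f : Pt → ℂ) (γ : Pt) (hγ : Generic N hb γ) :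
    Eraise hb n (Elower hb n f) γ - Elower hb n (Eraise hb n f) γ =
      Ediag hb n f γ - Ediag hb (n + 1) f γ :=
  gz_commutator_diag_general N hb hhb n hn1 hn2 f γ hγ
end
end

section
/- Assume ℏ is a positive real number. Define w_N : ℂ^Γ → ℂ by w_N(γ) = exp(−(π/ℏ) ∑_{n=1}^{N−1} (n−1) ∑_{j=1}^{n} γ_{nj}) · ∏_{n=1}^{N−1} ∏_{k=1}^{n} ∏_{m=1}^{n+1} exp(((γ_{nk} − γ_{n+1,m})/(iℏ) + 1/2)·log ℏ) · Γ((γ_{nk} − γ_{n+1,m})/(iℏ) + 1/2), where Γ denotes the complex Gamma function, log ℏ is the real logarithm, and the γ_{N,m} are the fixed parameters. Then w_N is a Whittaker vector for the raising Gelfand–Zetlin operators with character value −i/ℏ: for every 1 ≤ n ≤ N−1, (E_{n,n+1} w_N)(γ) = −(i/ℏ) · w_N(γ) at every point γ such that γ_{kj} − γ_{ks} ∉ iℏ·ℤ for all k and all j ≠ s, and such that none of the Gamma factors occurring on either side (including those at shifted arguments) is evaluated at a pole. -/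
noncomputable section

open Finset

/-- The Whittaker vector `w_N` built from Gamma functions. -/
def wN (N : ℕ) (hb : ℝ) (γ : Pt) : ℂ :=
  Complex.exp ((-(Real.pi / hb) : ℝ) *
      ∑ n ∈ Finset.Icc 1 (N - 1), ((n : ℂ) - 1) * ∑ j ∈ Finset.Icc 1 n, γ (n, j)) *
    ∏ n ∈ Finset.Icc 1 (N - 1), ∏ k ∈ Finset.Icc 1 n, ∏ m ∈ Finset.Icc 1 (n + 1),
      (Complex.exp (((γ (n, k) - γ (n + 1, m)) / (Complex.I * (hb : ℂ)) + 1 / 2) *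
          (Real.log hb : ℂ)) *
        Complex.Gamma ((γ (n, k) - γ (n + 1, m)) / (Complex.I * (hb : ℂ)) + 1 / 2))

section AuxGZ
open Finset Polynomial

private lemma leadingCoeff_lagrange_basis {s : Finset ℕ} {v : ℕ → ℂ}
    (hvs : Set.InjOn v s) {i : ℕ} (hi : i ∈ s) :
    (Lagrange.basis s v i).leadingCoeff = (∏ j ∈ s.erase i, (v i - v j))⁻¹ := by
  rw [Lagrange.basis, Polynomial.leadingCoeff_prod, ← Finset.prod_inv_distrib]
  refine Finset.prod_congr rfl fun j hj => ?_
  have hji : j ≠ i := (Finset.mem_erase.mp hj).1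
  have hjs : j ∈ s := (Finset.mem_erase.mp hj).2
  have hne : v i ≠ v j := fun h => hji (hvs hjs hi h.symm)
  rw [Lagrange.basisDivisor, leadingCoeff_mul, leadingCoeff_C,
    (monic_X_sub_C (v j)).leadingCoeff, mul_one]

private lemma lagrange_sum_div {s : Finset ℕ} {v : ℕ → ℂ} (hvs : Set.InjOn v s)
    (P : ℂ[X]) (hdeg : P.degree < s.card) :
    ∑ j ∈ s, P.eval (v j) / ∏ t ∈ s.erase j, (v j - v t) = P.coeff (s.card - 1) := by
  conv_rhs => rw [Lagrange.eq_interpolate hvs hdeg]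
  rw [Lagrange.interpolate_apply, Polynomial.finset_sum_coeff]
  refine Finset.sum_congr rfl fun j hj => ?_
  rw [Polynomial.coeff_C_mul]
  have h : (Lagrange.basis s v j).coeff (s.card - 1) = (Lagrange.basis s v j).leadingCoeff := by
    rw [Polynomial.leadingCoeff, Lagrange.natDegree_basis hvs hj]
  rw [h, leadingCoeff_lagrange_basis hvs hj, div_eq_mul_inv]

private lemma sum_prod_sub_div {s : Finset ℕ} {v : ℕ → ℂ} (hvs : Set.InjOn v s)
    (hcard : 1 ≤ s.card) (c : ℕ → ℂ) (t : Finset ℕ) (hts : t.card = s.card - 1) :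
    ∑ j ∈ s, (∏ k ∈ t, (c k - v j)) / ∏ r ∈ s.erase j, (v j - v r)
      = (-1 : ℂ) ^ (s.card - 1) := by
  set P : ℂ[X] := ∏ k ∈ t, (C (c k) - X) with hP
  have hfac : ∀ k : ℕ, (C (c k) - X) = -(X - C (c k)) := fun k => by ring
  have hne : ∀ k ∈ t, (C (c k) - X : ℂ[X]) ≠ 0 := by
    intro k _; rw [hfac]; exact neg_ne_zero.mpr (X_sub_C_ne_zero (c k))
  have hndeg : P.natDegree = s.card - 1 := by
    rw [hP, Polynomial.natDegree_prod _ _ hne, ← hts, Finset.card_eq_sum_ones]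
    refine Finset.sum_congr rfl fun k _ => ?_
    rw [hfac, natDegree_neg, natDegree_X_sub_C]
  have hP0 : P ≠ 0 := Finset.prod_ne_zero_iff.mpr hne
  have hdeg : P.degree < s.card := by
    rw [Polynomial.degree_eq_natDegree hP0, hndeg]
    exact_mod_cast Nat.sub_lt (lt_of_lt_of_le one_pos hcard) one_pos
  have heval : ∀ j ∈ s, P.eval (v j) = ∏ k ∈ t, (c k - v j) := by
    intro j _; rw [hP, Polynomial.eval_prod]
    exact Finset.prod_congr rfl fun k _ => by simp
  have hlc : P.coeff (s.card - 1) = (-1 : ℂ) ^ (s.card - 1) := by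
    rw [← hndeg, ← Polynomial.leadingCoeff, hP, Polynomial.leadingCoeff_prod]
    have hl : ∀ k ∈ t, (C (c k) - X : ℂ[X]).leadingCoeff = -1 := fun k _ => by
      rw [hfac, leadingCoeff_neg, (monic_X_sub_C (c k)).leadingCoeff]
    rw [Finset.prod_congr rfl hl, Finset.prod_const, hts, hndeg]
  rw [← hlc, ← lagrange_sum_div hvs P hdeg]
  exact Finset.sum_congr rfl fun j hj => by rw [heval j hj]

private lemma gamma_step_down (ih L d : ℂ) (hz : d / ih - 1/2 ≠ 0) (hih : ih ≠ 0) :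
    Complex.exp (((d - ih) / ih + 1/2) * L) * Complex.Gamma ((d - ih)/ih + 1/2)
      = (Complex.exp ((d/ih + 1/2) * L) * Complex.Gamma (d/ih + 1/2)) *
        (Complex.exp (-L) * (d/ih - 1/2)⁻¹) := by
  have h1 : (d - ih)/ih + 1/2 = d/ih - 1/2 := by field_simp; ring
  have h2 : d/ih + 1/2 = (d/ih - 1/2) + 1 := by ring
  set z := d/ih - 1/2
  rw [h1, h2, Complex.Gamma_add_one _ hz, add_mul, one_mul, Complex.exp_add]
  have hE : Complex.exp L * Complex.exp (-L) = 1 := by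
    rw [← Complex.exp_add, add_neg_cancel, Complex.exp_zero]
  have hZ : z * z⁻¹ = 1 := mul_inv_cancel₀ hz
  calc Complex.exp (z*L) * Complex.Gamma z
      = Complex.exp (z*L) * Complex.Gamma z * ((Complex.exp L * Complex.exp (-L)) * (z * z⁻¹)) := by
        rw [hE, hZ]; ring
    _ = Complex.exp (z * L) * Complex.exp L * (z * Complex.Gamma z) * (Complex.exp (-L) * z⁻¹) := by
        ring

private lemma gamma_step_up (ih L d : ℂ) (hz : d / ih + 1/2 ≠ 0) (hih : ih ≠ 0) :
    Complex.exp (((d + ih) / ih + 1/2) * L) * Complex.Gamma ((d + ih)/ih + 1/2)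
      = (Complex.exp ((d/ih + 1/2) * L) * Complex.Gamma (d/ih + 1/2)) *
        (Complex.exp L * (d/ih + 1/2)) := by
  have h1 : (d + ih)/ih + 1/2 = (d/ih + 1/2) + 1 := by field_simp; ring
  set z := d/ih + 1/2
  rw [h1, Complex.Gamma_add_one _ hz, add_mul, one_mul, Complex.exp_add]
  ring

private lemma wN_shift (N : ℕ) (hN : 2 ≤ N) (hb : ℝ) (hhb : 0 < hb)
    (n : ℕ) (hn1 : 1 ≤ n) (hn2 : n ≤ N - 1) (γ : Pt)
    (hpole : ∀ a k m, 1 ≤ a → a ≤ N - 1 → 1 ≤ k → k ≤ a → 1 ≤ m → m ≤ a + 1 →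
      ∀ t : ℤ, t.natAbs ≤ 1 → ∀ z : ℤ, z ≤ 0 →
        (γ (a, k) - γ (a + 1, m)) / (Complex.I * (hb : ℂ)) + 1 / 2 + (t : ℂ) ≠ (z : ℂ))
    (j : ℕ) (hj1 : 1 ≤ j) (hj2 : j ≤ n) :
    wN N hb (shift n j (-(Complex.I * (hb:ℂ))) γ) *
      ∏ m ∈ Finset.Icc 1 (n+1), (γ (n,j) - γ (n+1,m) - Complex.I * (hb:ℂ)/2)
    = (-1)^n * (∏ k ∈ Finset.Icc 1 (n-1), (γ (n-1,k) - γ (n,j) + Complex.I * (hb:ℂ)/2)) *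
      wN N hb γ := by
  have hb0 : (hb:ℂ) ≠ 0 := Complex.ofReal_ne_zero.mpr hhb.ne'
  set ih : ℂ := Complex.I * (hb:ℂ) with hih_def
  have hih : ih ≠ 0 := mul_ne_zero Complex.I_ne_zero hb0
  set L : ℂ := ((Real.log hb : ℝ) : ℂ) with hL_def
  set δ : Pt := shift n j (-ih) γ with hδ_def
  have hδ : ∀ p : ℕ × ℕ, p ≠ (n, j) → δ p = γ p := by
    intro p hp; simp [hδ_def, shift, hp]
  have hδj : δ (n, j) = γ (n, j) - ih := by
    simp [hδ_def, shift, sub_eq_add_neg]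
  set c : ℂ := ((-(Real.pi / hb) : ℝ) : ℂ) with hc_def
  set G : ℕ → Pt → ℂ := fun a η => ∏ k ∈ Finset.Icc 1 a, ∏ m ∈ Finset.Icc 1 (a+1),
      (Complex.exp (((η (a,k) - η (a+1,m)) / ih + 1/2) * L) *
        Complex.Gamma ((η (a,k) - η (a+1,m)) / ih + 1/2)) with hG_def
  have hwN : ∀ η : Pt, wN N hb η =
      Complex.exp (c * ∑ a ∈ Finset.Icc 1 (N-1), ((a:ℂ) - 1) * ∑ i ∈ Finset.Icc 1 a, η (a,i)) *
      ∏ a ∈ Finset.Icc 1 (N-1), G a η := fun η => rfl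
  have hnN : n ∈ Finset.Icc 1 (N-1) := Finset.mem_Icc.mpr ⟨hn1, hn2⟩
  have hjI : j ∈ Finset.Icc 1 n := Finset.mem_Icc.mpr ⟨hj1, hj2⟩
  -- exponential prefactor
  have hsum : ∀ a ∈ Finset.Icc 1 (N-1),
      ∑ i ∈ Finset.Icc 1 a, δ (a, i)
        = (∑ i ∈ Finset.Icc 1 a, γ (a, i)) + (if a = n then -ih else 0) := by
    intro a _
    by_cases han : a = n
    · subst han
      rw [if_pos rfl]
      have h : ∀ i ∈ Finset.Icc 1 a, δ (a, i) = γ (a, i) + (if i = j then -ih else 0) := by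
        intro i _
        by_cases hi : i = j
        · subst hi; rw [if_pos rfl, hδj]; ring
        · rw [if_neg hi, add_zero]
          exact hδ (a, i) (by simp [hi])
      rw [Finset.sum_congr rfl h, Finset.sum_add_distrib, Finset.sum_ite_eq' _ j, if_pos hjI]
    · rw [if_neg han, add_zero]
      exact Finset.sum_congr rfl fun i _ => hδ (a, i) (by simp [han])
  have hExp : Complex.exp (c * ∑ a ∈ Finset.Icc 1 (N-1), ((a:ℂ)-1) * ∑ i ∈ Finset.Icc 1 a, δ (a,i))
      = Complex.exp (c * ∑ a ∈ Finset.Icc 1 (N-1), ((a:ℂ)-1) * ∑ i ∈ Finset.Icc 1 a, γ (a,i))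
        * (-1 : ℂ)^(n-1) := by
    have hEsum : ∑ a ∈ Finset.Icc 1 (N-1), ((a:ℂ) - 1) * ∑ i ∈ Finset.Icc 1 a, δ (a, i)
        = (∑ a ∈ Finset.Icc 1 (N-1), ((a:ℂ) - 1) * ∑ i ∈ Finset.Icc 1 a, γ (a, i))
          + ((n:ℂ) - 1) * (-ih) := by
      rw [Finset.sum_congr rfl fun a ha => by rw [hsum a ha, mul_add]]
      rw [Finset.sum_add_distrib]
      congr 1
      have h : ∀ a ∈ Finset.Icc 1 (N-1), ((a:ℂ)-1) * (if a = n then -ih else 0)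
          = (if a = n then ((a:ℂ)-1) * (-ih) else 0) := fun a _ => by
        split <;> simp
      rw [Finset.sum_congr rfl h, Finset.sum_ite_eq' _ n, if_pos hnN]
    rw [hEsum, mul_add, Complex.exp_add]
    congr 1
    have harg : c * (((n:ℂ)-1) * (-ih)) = ((n-1 : ℕ) : ℂ) * (Real.pi * Complex.I) := by
      rw [hc_def, hih_def]
      push_cast [Nat.cast_sub hn1]
      field_simp
    rw [harg, Complex.exp_nat_mul, Complex.exp_pi_mul_I]
  -- correction factors
  set Rn : ℂ := ∏ m ∈ Finset.Icc 1 (n+1),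
      (Complex.exp (-L) * ((γ (n,j) - γ (n+1,m)) / ih - 1/2)⁻¹) with hRn_def
  set Rm : ℂ := ∏ k ∈ Finset.Icc 1 (n-1),
      (Complex.exp L * ((γ (n-1,k) - γ (n,j)) / ih + 1/2)) with hRm_def
  have hne1 : ∀ m : ℕ, ((n+1 : ℕ), m) ≠ (n, j) := by
    intro m h; simp only [Prod.mk.injEq] at h; omega
  have hzm : ∀ m, 1 ≤ m → m ≤ n + 1 → (γ (n,j) - γ (n+1,m)) / ih - 1/2 ≠ 0 := by
    intro m hm1 hm2 h
    apply hpole n j m hn1 hn2 hj1 hj2 hm1 hm2 (-1) (by decide) 0 le_rfl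
    push_cast
    linear_combination h
  have hGn : G n δ = G n γ * Rn := by
    simp only [hG_def]
    conv_lhs => rw [← Finset.mul_prod_erase _ _ hjI]
    conv_rhs => rw [← Finset.mul_prod_erase _ _ hjI]
    have hrest : ∀ k ∈ (Finset.Icc 1 n).erase j, (∏ m ∈ Finset.Icc 1 (n+1),
        (Complex.exp (((δ (n,k) - δ (n+1,m)) / ih + 1/2) * L) *
          Complex.Gamma ((δ (n,k) - δ (n+1,m)) / ih + 1/2)))
        = ∏ m ∈ Finset.Icc 1 (n+1),
        (Complex.exp (((γ (n,k) - γ (n+1,m)) / ih + 1/2) * L) *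
          Complex.Gamma ((γ (n,k) - γ (n+1,m)) / ih + 1/2)) := by
      intro k hk
      refine Finset.prod_congr rfl fun m _ => ?_
      rw [hδ (n,k) (by simp [(Finset.mem_erase.mp hk).1]), hδ (n+1,m) (hne1 m)]
    have hslice : (∏ m ∈ Finset.Icc 1 (n+1),
        (Complex.exp (((δ (n,j) - δ (n+1,m)) / ih + 1/2) * L) *
          Complex.Gamma ((δ (n,j) - δ (n+1,m)) / ih + 1/2)))
        = (∏ m ∈ Finset.Icc 1 (n+1),
        (Complex.exp (((γ (n,j) - γ (n+1,m)) / ih + 1/2) * L) *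
          Complex.Gamma ((γ (n,j) - γ (n+1,m)) / ih + 1/2))) * Rn := by
      rw [hRn_def, ← Finset.prod_mul_distrib]
      refine Finset.prod_congr rfl fun m hm => ?_
      have hm' := Finset.mem_Icc.mp hm
      have harg : δ (n, j) - δ (n+1, m) = (γ (n,j) - γ (n+1,m)) - ih := by
        rw [hδj, hδ (n+1,m) (hne1 m)]; ring
      rw [harg]
      exact gamma_step_down ih L _ (hzm m hm'.1 hm'.2) hih
    rw [hslice, Finset.prod_congr rfl hrest]
    ring
  -- level-(n-1) factor
  have hGm : ∀ a ∈ Finset.Icc 1 (N-1), a + 1 = n →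
      G a δ = G a γ * Rm := by
    intro a ha han
    have ha' := Finset.mem_Icc.mp ha
    subst han
    rw [hRm_def]
    simp only [hG_def, Nat.add_sub_cancel]
    rw [← Finset.prod_mul_distrib]
    refine Finset.prod_congr rfl fun k hk => ?_
    have hk' := Finset.mem_Icc.mp hk
    conv_lhs => rw [← Finset.mul_prod_erase _ _ hjI]
    conv_rhs => rw [← Finset.mul_prod_erase _ _ hjI]
    have hrest : ∀ m ∈ (Finset.Icc 1 (a+1)).erase j,
        (Complex.exp (((δ (a,k) - δ (a+1,m)) / ih + 1/2) * L) *
          Complex.Gamma ((δ (a,k) - δ (a+1,m)) / ih + 1/2))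
        = (Complex.exp (((γ (a,k) - γ (a+1,m)) / ih + 1/2) * L) *
          Complex.Gamma ((γ (a,k) - γ (a+1,m)) / ih + 1/2)) := by
      intro m hm
      rw [hδ (a,k) (by intro h; simp only [Prod.mk.injEq] at h; omega),
        hδ (a+1,m) (by intro h; injection h with h1 h2; exact (Finset.mem_erase.mp hm).1 h2)]
    have hz : (γ (a,k) - γ (a+1,j)) / ih + 1/2 ≠ 0 := by
      intro h
      apply hpole a k j ha'.1 ha'.2 hk'.1 hk'.2 hj1 hj2 0 (by decide) 0 le_rfl
      push_cast
      linear_combination h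
    have harg : δ (a, k) - δ (a+1, j) = (γ (a,k) - γ (a+1,j)) + ih := by
      rw [hδ (a,k) (by intro h; simp only [Prod.mk.injEq] at h; omega), hδj]
      ring
    rw [Finset.prod_congr rfl hrest, harg, gamma_step_up ih L _ hz hih]
    ring
  have hGo : ∀ a ∈ Finset.Icc 1 (N-1), a ≠ n → a + 1 ≠ n → G a δ = G a γ := by
    intro a _ h1 h2
    simp only [hG_def]
    refine Finset.prod_congr rfl fun k _ => Finset.prod_congr rfl fun m _ => ?_
    rw [hδ (a,k) (by intro h; simp only [Prod.mk.injEq] at h; omega),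
      hδ (a+1,m) (by intro h; simp only [Prod.mk.injEq] at h; omega)]
  -- the full product
  have hProd : ∏ a ∈ Finset.Icc 1 (N-1), G a δ
      = (∏ a ∈ Finset.Icc 1 (N-1), G a γ) * (Rn * Rm) := by
    have hstep : ∀ a ∈ Finset.Icc 1 (N-1), G a δ
        = (G a γ * (if a = n then Rn else 1)) * (if a = n - 1 then Rm else 1) := by
      intro a ha
      have ha' := Finset.mem_Icc.mp ha
      by_cases h1 : a = n
      · subst h1
        rw [if_pos rfl, if_neg (by omega), mul_one, hGn]
      · by_cases h2 : a + 1 = n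
        · rw [if_neg h1, if_pos (show a = n - 1 by omega), mul_one]
          exact hGm a ha h2
        · rw [if_neg h1, if_neg (by omega), mul_one, mul_one]
          exact hGo a ha h1 h2
    rw [Finset.prod_congr rfl hstep, Finset.prod_mul_distrib, Finset.prod_mul_distrib]
    rw [Finset.prod_ite_eq' (Finset.Icc 1 (N-1)) n (fun _ => Rn), if_pos hnN]
    rw [Finset.prod_ite_eq' (Finset.Icc 1 (N-1)) (n-1) (fun _ => Rm)]
    by_cases hn' : 2 ≤ n
    · rw [if_pos (Finset.mem_Icc.mpr ⟨by omega, by omega⟩), mul_assoc]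
    · have h1 : n = 1 := by omega
      have hRm1 : Rm = 1 := by
        rw [hRm_def, h1]
        simp
      rw [if_neg (by rw [h1]; simp), hRm1, mul_assoc]
  -- scalar identities
  have hexpL : Complex.exp L = (hb:ℂ) := by
    rw [hL_def, ← Complex.ofReal_exp, Real.exp_log hhb]
  have hRnA : Rn * (∏ m ∈ Finset.Icc 1 (n+1), (γ (n,j) - γ (n+1,m) - ih/2))
      = (Complex.exp (-L) * ih) ^ (n+1) := by
    rw [hRn_def, ← Finset.prod_mul_distrib]
    have h : ∀ m ∈ Finset.Icc 1 (n+1),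
        Complex.exp (-L) * ((γ (n,j) - γ (n+1,m)) / ih - 1/2)⁻¹ *
          (γ (n,j) - γ (n+1,m) - ih/2) = Complex.exp (-L) * ih := by
      intro m hm
      have hm' := Finset.mem_Icc.mp hm
      have hz := hzm m hm'.1 hm'.2
      have hzeq : (γ (n,j) - γ (n+1,m)) / ih - 1/2
          = (γ (n,j) - γ (n+1,m) - ih/2) / ih := by
        rw [eq_div_iff hih, sub_mul, div_mul_cancel₀ _ hih]; ring
      have hX : γ (n,j) - γ (n+1,m) - ih/2 ≠ 0 := by
        intro h0; apply hz; rw [hzeq, h0, zero_div]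
      rw [hzeq, inv_div, mul_assoc, div_mul_cancel₀ _ hX]
    rw [Finset.prod_congr rfl h, Finset.prod_const, Nat.card_Icc]
    norm_num
  have hRmB : Rm = (Complex.exp L / ih) ^ (n-1) *
      ∏ k ∈ Finset.Icc 1 (n-1), (γ (n-1,k) - γ (n,j) + ih/2) := by
    rw [hRm_def]
    have h : ∀ k ∈ Finset.Icc 1 (n-1), Complex.exp L * ((γ (n-1,k) - γ (n,j)) / ih + 1/2)
        = (Complex.exp L / ih) * (γ (n-1,k) - γ (n,j) + ih/2) := by
      intro k _
      have hzeq : (γ (n-1,k) - γ (n,j)) / ih + 1/2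
          = (γ (n-1,k) - γ (n,j) + ih/2) / ih := by
        rw [eq_div_iff hih, add_mul, div_mul_cancel₀ _ hih]; ring
      rw [hzeq]; ring
    rw [Finset.prod_congr rfl h, Finset.prod_mul_distrib, Finset.prod_const]
    congr 2
    simp
  have hkey : (-1:ℂ)^(n-1) * ((Complex.exp (-L) * ih)^(n+1) * (Complex.exp L / ih)^(n-1))
      = (-1:ℂ)^n := by
    have hE1 : Complex.exp (-L) * ih * (Complex.exp L / ih) = 1 := by
      rw [Complex.exp_neg]
      field_simp
    have hE2 : (Complex.exp (-L) * ih) ^ 2 = -1 := by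
      rw [Complex.exp_neg, hexpL, hih_def]
      have h : ((hb:ℂ))⁻¹ * (Complex.I * (hb:ℂ)) = Complex.I := by field_simp
      rw [h, Complex.I_sq]
    have h2 : n + 1 = (n-1) + 2 := by omega
    calc (-1:ℂ)^(n-1) * ((Complex.exp (-L) * ih)^(n+1) * (Complex.exp L / ih)^(n-1))
        = (-1:ℂ)^(n-1) * (((Complex.exp (-L) * ih) * (Complex.exp L / ih))^(n-1)
            * (Complex.exp (-L) * ih)^2) := by
          rw [h2, pow_add, mul_pow]; ring
      _ = (-1:ℂ)^(n-1) * (-1) := by rw [hE1, one_pow, hE2, one_mul]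
      _ = (-1:ℂ)^n := by
          rw [← pow_succ]
          congr 1
          omega
  -- assemble
  rw [hwN δ, hwN γ, hExp, hProd, hRmB]
  set Eg : ℂ := Complex.exp (c * ∑ a ∈ Finset.Icc 1 (N-1), ((a:ℂ) - 1) *
      ∑ i ∈ Finset.Icc 1 a, γ (a,i)) with hEg_def
  set Pg : ℂ := ∏ a ∈ Finset.Icc 1 (N-1), G a γ with hPg_def
  set A : ℂ := ∏ m ∈ Finset.Icc 1 (n+1), (γ (n,j) - γ (n+1,m) - ih/2) with hA_def
  set B : ℂ := ∏ k ∈ Finset.Icc 1 (n-1), (γ (n-1,k) - γ (n,j) + ih/2) with hB_def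
  linear_combination (Eg * Pg * B * (-1:ℂ)^(n-1) * (Complex.exp L / ih)^(n-1)) * hRnA
    + (Eg * Pg * B) * hkey

end AuxGZ

/-- `w_N` is a Whittaker vector for the raising Gelfand–Zetlin
operators with character value `−i/ħ`, at generic points avoiding the poles of
all Gamma factors involved (also those at shifted arguments). -/
theorem gz_whittaker_vector (N : ℕ) (hN : 2 ≤ N) (hb : ℝ) (hhb : 0 < hb)
    (n : ℕ) (hn1 : 1 ≤ n) (hn2 : n ≤ N - 1)
    (γ : Pt) (hγ : Generic N (hb : ℂ) γ)
    (hpole : ∀ a k m, 1 ≤ a → a ≤ N - 1 → 1 ≤ k → k ≤ a → 1 ≤ m → m ≤ a + 1 →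
      ∀ t : ℤ, t.natAbs ≤ 1 → ∀ z : ℤ, z ≤ 0 →
        (γ (a, k) - γ (a + 1, m)) / (Complex.I * (hb : ℂ)) + 1 / 2 + (t : ℂ) ≠ (z : ℂ)) :
    Eraise (hb : ℂ) n (wN N hb) γ = -(Complex.I / (hb : ℂ)) * wN N hb γ := by
  classical
  have hb0 : (hb:ℂ) ≠ 0 := Complex.ofReal_ne_zero.mpr hhb.ne'
  have hih : Complex.I * (hb:ℂ) ≠ 0 := mul_ne_zero Complex.I_ne_zero hb0
  have hnN : n ≤ N := by omega
  have hinj : Set.InjOn (fun s => γ (n, s)) ↑(Finset.Icc 1 n) := by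
    intro x hx y hy hxy
    by_contra hne
    have hx' := Finset.mem_Icc.mp (Finset.mem_coe.mp hx)
    have hy' := Finset.mem_Icc.mp (Finset.mem_coe.mp hy)
    apply hγ n x y hn1 hnN hx'.1 hx'.2 hy'.1 hy'.2 hne 0
    push_cast
    rw [mul_zero, sub_eq_zero]
    exact hxy
  simp only [Eraise]
  have hterm : ∀ j ∈ Finset.Icc 1 n,
      ((∏ r ∈ Finset.Icc 1 (n + 1), (γ (n, j) - γ (n + 1, r) - Complex.I * (hb:ℂ) / 2)) /
          ∏ s ∈ (Finset.Icc 1 n).erase j, (γ (n, j) - γ (n, s))) *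
        wN N hb (shift n j (-(Complex.I * (hb:ℂ))) γ)
      = ((-1:ℂ)^n * wN N hb γ) *
        ((∏ k ∈ Finset.Icc 1 (n-1), ((γ (n-1,k) + Complex.I * (hb:ℂ)/2) - γ (n,j))) /
          ∏ s ∈ (Finset.Icc 1 n).erase j, (γ (n, j) - γ (n, s))) := by
    intro j hj
    have hj' := Finset.mem_Icc.mp hj
    have hA : (∏ r ∈ Finset.Icc 1 (n + 1),
        (γ (n, j) - γ (n + 1, r) - Complex.I * (hb:ℂ) / 2)) ≠ 0 := by
      rw [Finset.prod_ne_zero_iff]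
      intro m hm h0
      have hm' := Finset.mem_Icc.mp hm
      have hz : (γ (n,j) - γ (n+1,m)) / (Complex.I * (hb:ℂ)) - 1/2 ≠ 0 := by
        intro h
        apply hpole n j m hn1 hn2 hj'.1 hj'.2 hm'.1 hm'.2 (-1) (by decide) 0 le_rfl
        push_cast
        linear_combination h
      apply hz
      rw [show (γ (n,j) - γ (n+1,m)) / (Complex.I * (hb:ℂ)) - 1/2
          = (γ (n,j) - γ (n+1,m) - Complex.I * (hb:ℂ)/2) / (Complex.I * (hb:ℂ)) from by
        rw [eq_div_iff hih, sub_mul, div_mul_cancel₀ _ hih]; ring]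
      rw [h0, zero_div]
    have hD : (∏ s ∈ (Finset.Icc 1 n).erase j, (γ (n, j) - γ (n, s))) ≠ 0 := by
      rw [Finset.prod_ne_zero_iff]
      intro s hs h0
      have hs0 := Finset.mem_erase.mp hs
      have hs' := Finset.mem_Icc.mp hs0.2
      apply hγ n j s hn1 hnN hj'.1 hj'.2 hs'.1 hs'.2 (Ne.symm hs0.1) 0
      push_cast
      rw [mul_zero]
      exact h0
    have hws := wN_shift N hN hb hhb n hn1 hn2 γ hpole j hj'.1 hj'.2
    have hwδ : wN N hb (shift n j (-(Complex.I * (hb:ℂ))) γ)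
        = ((-1:ℂ)^n * (∏ k ∈ Finset.Icc 1 (n-1),
              (γ (n-1,k) - γ (n,j) + Complex.I * (hb:ℂ)/2)) * wN N hb γ) /
          (∏ r ∈ Finset.Icc 1 (n+1), (γ (n,j) - γ (n+1,r) - Complex.I * (hb:ℂ)/2)) := by
      rw [eq_div_iff hA]
      exact hws
    have hB : (∏ k ∈ Finset.Icc 1 (n-1), ((γ (n-1,k) + Complex.I * (hb:ℂ)/2) - γ (n,j)))
        = ∏ k ∈ Finset.Icc 1 (n-1), (γ (n-1,k) - γ (n,j) + Complex.I * (hb:ℂ)/2) :=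
      Finset.prod_congr rfl fun k _ => by ring
    rw [hwδ, hB]
    set A : ℂ := ∏ r ∈ Finset.Icc 1 (n + 1),
        (γ (n, j) - γ (n + 1, r) - Complex.I * (hb:ℂ) / 2) with hA_def
    set D : ℂ := ∏ s ∈ (Finset.Icc 1 n).erase j, (γ (n, j) - γ (n, s)) with hD_def
    set BB : ℂ := ∏ k ∈ Finset.Icc 1 (n-1),
        (γ (n-1,k) - γ (n,j) + Complex.I * (hb:ℂ)/2) with hBB_def
    have hAA : A * A⁻¹ = 1 := mul_inv_cancel₀ hA
    linear_combination ((-1:ℂ)^n * BB * wN N hb γ * D⁻¹) * hAA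
  rw [Finset.sum_congr rfl hterm, ← Finset.mul_sum]
  have hcard : (Finset.Icc 1 n).card = n := by simp
  have hcards : (Finset.Icc 1 (n-1)).card = (Finset.Icc 1 n).card - 1 := by
    rw [Nat.card_Icc, Nat.card_Icc]
    omega
  have hsum : ∑ j ∈ Finset.Icc 1 n,
      (∏ k ∈ Finset.Icc 1 (n-1), ((γ (n-1,k) + Complex.I * (hb:ℂ)/2) - γ (n,j))) /
        ∏ s ∈ (Finset.Icc 1 n).erase j, (γ (n,j) - γ (n,s)) = (-1:ℂ)^(n-1) := by
    have h := sum_prod_sub_div hinj (by rw [hcard]; exact hn1)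
      (fun k => γ (n-1,k) + Complex.I * (hb:ℂ)/2) (Finset.Icc 1 (n-1)) hcards
    rw [hcard] at h
    exact h
  rw [hsum]
  have hpow : (-1:ℂ)^n * (-1:ℂ)^(n-1) = -1 := by
    rw [← pow_add]
    have h : n + (n-1) = 2*(n-1) + 1 := by omega
    rw [h, pow_succ, pow_mul]
    norm_num
  have hI : -(1 / (Complex.I * (hb:ℂ))) = Complex.I / (hb:ℂ) := by
    rw [one_div, mul_inv, Complex.inv_I, div_eq_mul_inv]
    ring
  linear_combination (-(1/(Complex.I * (hb:ℂ))) * wN N hb γ) * hpow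
    + (-(wN N hb γ)) * hI
end
end

section
/- For every 1 ≤ n ≤ N−1 and all λ, μ ∈ ℂ, the Yangian-type operators satisfy (λ − μ + iℏ) 𝒜_n(λ) ℬ_n(μ) = (λ − μ) ℬ_n(μ) 𝒜_n(λ) + iℏ 𝒜_n(μ) ℬ_n(λ), as an identity of operators applied to any function f : ℂ^Γ → ℂ at every point γ with γ_{kj} − γ_{ks} ∉ iℏ·ℤ for all k and all j ≠ s. -/
noncomputable section

open Finset

/-- The operator `𝒜_n(λ)`: multiplication by `∏_{j=1}^n (λ − γ_{nj})`. -/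
def Aop (l : ℂ) (n : ℕ) : Op := fun f γ =>
  (∏ j ∈ Finset.Icc 1 n, (l - γ (n, j))) * f γ

/-- The operator `ℬ_n(λ)`. -/
def Bop (hb l : ℂ) (n : ℕ) : Op := fun f γ =>
  ∑ j ∈ Finset.Icc 1 n,
    (∏ s ∈ (Finset.Icc 1 n).erase j, ((l - γ (n, s)) / (γ (n, j) - γ (n, s)))) *
      (∏ r ∈ Finset.Icc 1 (n + 1), (γ (n, j) - γ (n + 1, r) - Complex.I * hb / 2)) *
      f (shift n j (-(Complex.I * hb)) γ)

/-- The operator `𝒞_n(λ)`. -/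
def Cop (hb l : ℂ) (n : ℕ) : Op := fun f γ =>
  -∑ j ∈ Finset.Icc 1 n,
    (∏ s ∈ (Finset.Icc 1 n).erase j, ((l - γ (n, s)) / (γ (n, j) - γ (n, s)))) *
      (∏ r ∈ Finset.Icc 1 (n - 1), (γ (n, j) - γ (n - 1, r) + Complex.I * hb / 2)) *
      f (shift n j (Complex.I * hb) γ)

/-- the Yangian relation
`(λ − μ + iħ) 𝒜_n(λ) ℬ_n(μ) = (λ − μ) ℬ_n(μ) 𝒜_n(λ) + iħ 𝒜_n(μ) ℬ_n(λ)`,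
pointwise at generic points. -/
theorem yangian_AB_relation (N : ℕ) (hN : 2 ≤ N) (hb : ℂ) (hhb : hb ≠ 0)
    (n : ℕ) (hn1 : 1 ≤ n) (hn2 : n ≤ N - 1) (l μ : ℂ)
    (f : Pt → ℂ) (γ : Pt) (hγ : Generic N hb γ) :
    (l - μ + Complex.I * hb) * Aop l n (Bop hb μ n f) γ =
      (l - μ) * Bop hb μ n (Aop l n f) γ + Complex.I * hb * Aop μ n (Bop hb l n f) γ := by
  simp only [Aop, Bop, Finset.mul_sum, ← Finset.sum_add_distrib]
  refine Finset.sum_congr rfl ?_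
  intro j hj
  have hPs : ∏ s ∈ Finset.Icc 1 n, (l - shift n j (-(Complex.I*hb)) γ (n, s))
      = (l - γ (n,j) + Complex.I*hb) * ∏ s ∈ (Finset.Icc 1 n).erase j, (l - γ (n,s)) := by
    rw [← Finset.mul_prod_erase _ _ hj]
    congr 1
    · simp [shift]; ring
    · refine Finset.prod_congr rfl fun s hs => ?_
      have hne : (n, s) ≠ (n, j) := by
        simp only [Ne, Prod.mk.injEq]
        exact fun ⟨_, h⟩ => (Finset.ne_of_mem_erase hs) h
      simp [shift, hne]
  have hPl : ∏ s ∈ Finset.Icc 1 n, (l - γ (n, s))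
      = (l - γ (n,j)) * ∏ s ∈ (Finset.Icc 1 n).erase j, (l - γ (n,s)) :=
    (Finset.mul_prod_erase _ _ hj).symm
  have hPm : ∏ s ∈ Finset.Icc 1 n, (μ - γ (n, s))
      = (μ - γ (n,j)) * ∏ s ∈ (Finset.Icc 1 n).erase j, (μ - γ (n,s)) :=
    (Finset.mul_prod_erase _ _ hj).symm
  rw [hPs, hPl, hPm, Finset.prod_div_distrib, Finset.prod_div_distrib]
  simp only [div_eq_mul_inv]
  ring
end
end

section
/- For every 1 ≤ n ≤ N−1 and all λ, μ ∈ ℂ, the Yangian-type operators satisfy (λ − μ + iℏ) 𝒜_n(μ) 𝒞_n(λ) = (λ − μ) 𝒞_n(λ) 𝒜_n(μ) + iℏ 𝒜_n(λ) 𝒞_n(μ), as an identity of operators applied to any function f : ℂ^Γ → ℂ at every point γ with γ_{kj} − γ_{ks} ∉ iℏ·ℤ for all k and all j ≠ s. -/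
noncomputable section

open Finset

/-- the Yangian relation
`(λ − μ + iħ) 𝒜_n(μ) 𝒞_n(λ) = (λ − μ) 𝒞_n(λ) 𝒜_n(μ) + iħ 𝒜_n(λ) 𝒞_n(μ)`,
pointwise at generic points. -/
theorem yangian_AC_relation (N : ℕ) (hN : 2 ≤ N) (hb : ℂ) (hhb : hb ≠ 0)
    (n : ℕ) (hn1 : 1 ≤ n) (hn2 : n ≤ N - 1) (l μ : ℂ)
    (f : Pt → ℂ) (γ : Pt) (hγ : Generic N hb γ) :
    (l - μ + Complex.I * hb) * Aop μ n (Cop hb l n f) γ =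
      (l - μ) * Cop hb l n (Aop μ n f) γ + Complex.I * hb * Aop l n (Cop hb μ n f) γ := by
  simp only [Aop, Cop, mul_neg, Finset.mul_sum, ← neg_add, neg_inj,
    ← Finset.sum_add_distrib]
  apply Finset.sum_congr rfl
  intro j hj
  have hs' : ∀ s ∈ (Finset.Icc 1 n).erase j,
      shift n j (Complex.I * hb) γ (n, s) = γ (n, s) := by
    intro s hs
    have hne : s ≠ j := Finset.ne_of_mem_erase hs
    simp [shift, Prod.ext_iff, hne]
  have hshift : ∏ s ∈ Finset.Icc 1 n, (μ - shift n j (Complex.I * hb) γ (n, s))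
      = (μ - γ (n, j) - Complex.I * hb) *
        ∏ s ∈ (Finset.Icc 1 n).erase j, (μ - γ (n, s)) := by
    rw [← Finset.mul_prod_erase _ _ hj]
    congr 1
    · simp [shift]; ring
    · exact Finset.prod_congr rfl fun s hs => by rw [hs' s hs]
  have hmu : ∏ s ∈ Finset.Icc 1 n, (μ - γ (n, s))
      = (μ - γ (n, j)) * ∏ s ∈ (Finset.Icc 1 n).erase j, (μ - γ (n, s)) :=
    (Finset.mul_prod_erase _ _ hj).symm
  have hl : ∏ s ∈ Finset.Icc 1 n, (l - γ (n, s))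
      = (l - γ (n, j)) * ∏ s ∈ (Finset.Icc 1 n).erase j, (l - γ (n, s)) :=
    (Finset.mul_prod_erase _ _ hj).symm
  have hswap : (∏ s ∈ (Finset.Icc 1 n).erase j, ((μ - γ (n, s)) / (γ (n, j) - γ (n, s)))) *
      ∏ s ∈ (Finset.Icc 1 n).erase j, (l - γ (n, s))
      = (∏ s ∈ (Finset.Icc 1 n).erase j, ((l - γ (n, s)) / (γ (n, j) - γ (n, s)))) *
      ∏ s ∈ (Finset.Icc 1 n).erase j, (μ - γ (n, s)) := by
    rw [← Finset.prod_mul_distrib, ← Finset.prod_mul_distrib]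
    exact Finset.prod_congr rfl fun s _ => by ring
  rw [hshift, hmu, hl]
  linear_combination (-(Complex.I * hb * (l - γ (n, j)) *
    ((∏ r ∈ Finset.Icc 1 (n - 1), (γ (n, j) - γ (n - 1, r) + Complex.I * hb / 2)) *
      f (shift n j (Complex.I * hb) γ)))) * hswap
end
end
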